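/- arXiv:2604.02231 — 3 statements merged into one kernel-verified Lean document; each statement's English description precedes it below -/
import Mathlib

section
/- For any M ∈ R^{[2m,n]} and Q ∈ R^{[m,n]}, the solution set SOL(M,Q) is convex if and only if for any two solutions Z¹, Z² ∈ SOL(M,Q) the cross-complementarity conditions ⟨Z¹, MZ² + Q⟩ = 0 and ⟨Z², MZ¹ + Q⟩ = 0 hold. -/
open Finset

/-- The contraction product: `(tmul M Z) i = ∑ j, M i j * Z j`. -/
def tmul {m n : ℕ} (M : (Fin m → Fin n) → (Fin m → Fin n) → ℝ)
    (Z : (Fin m → Fin n) → ℝ) : (Fin m → Fin n) → ℝ :=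
  fun i => ∑ j : Fin m → Fin n, M i j * Z j

/-- Inner product of tensors. -/
def tinner {m n : ℕ} (A B : (Fin m → Fin n) → ℝ) : ℝ :=
  ∑ i : Fin m → Fin n, A i * B i

/-- `M` is T-column sufficient. -/
def TColSuff {m n : ℕ} (M : (Fin m → Fin n) → (Fin m → Fin n) → ℝ) : Prop :=
  ∀ Z : (Fin m → Fin n) → ℝ,
    (∀ i, Z i * tmul M Z i ≤ 0) → (∀ i, Z i * tmul M Z i = 0)

/-- `M` is T-column sufficient on the nonnegative orthant. -/
def TColSuffPlus {m n : ℕ} (M : (Fin m → Fin n) → (Fin m → Fin n) → ℝ) : Prop :=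
  ∀ Z : (Fin m → Fin n) → ℝ, (∀ i, 0 ≤ Z i) →
    (∀ i, Z i * tmul M Z i ≤ 0) → (∀ i, Z i * tmul M Z i = 0)

/-- `M` is a T-P tensor. -/
def TP {m n : ℕ} (M : (Fin m → Fin n) → (Fin m → Fin n) → ℝ) : Prop :=
  ∀ Z : (Fin m → Fin n) → ℝ, Z ≠ 0 → ∃ i, 0 < Z i * tmul M Z i

/-- `M` is T-non-degenerate. -/
def TND {m n : ℕ} (M : (Fin m → Fin n) → (Fin m → Fin n) → ℝ) : Prop :=
  ∀ Z : (Fin m → Fin n) → ℝ, Z ≠ 0 → ∃ i, Z i * tmul M Z i ≠ 0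

/-- `M` is T-positive semidefinite. -/
def TPSD {m n : ℕ} (M : (Fin m → Fin n) → (Fin m → Fin n) → ℝ) : Prop :=
  ∀ Z : (Fin m → Fin n) → ℝ, 0 ≤ tinner Z (tmul M Z)

/-- `M` is T-copositive. -/
def TCopositive {m n : ℕ} (M : (Fin m → Fin n) → (Fin m → Fin n) → ℝ) : Prop :=
  ∀ Z : (Fin m → Fin n) → ℝ, (∀ i, 0 ≤ Z i) → 0 ≤ tinner Z (tmul M Z)

/-- `M` is T-semi-positive. -/
def TSemiPos {m n : ℕ} (M : (Fin m → Fin n) → (Fin m → Fin n) → ℝ) : Prop :=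
  ∀ Z : (Fin m → Fin n) → ℝ, (∀ i, 0 ≤ Z i) → Z ≠ 0 →
    ∃ i, 0 < Z i ∧ 0 ≤ tmul M Z i

/-- The solution set of the TLCP. -/
def SOL {m n : ℕ} (M : (Fin m → Fin n) → (Fin m → Fin n) → ℝ)
    (Q : (Fin m → Fin n) → ℝ) : Set ((Fin m → Fin n) → ℝ) :=
  {Z | (∀ i, 0 ≤ Z i) ∧ (∀ i, 0 ≤ tmul M Z i + Q i) ∧
    tinner Z (fun i => tmul M Z i + Q i) = 0}

/-!
The residual `W(Z) = MZ + Q` is affine, so along a convex combination `Z = a Z¹ + b Z²` of two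
solutions the sign constraints `Z ≥ 0`, `W(Z) ≥ 0` persist, while the complementarity gap is
`⟨Z, W(Z)⟩ = a² ⟨Z¹, W(Z¹)⟩ + a b (⟨Z¹, W(Z²)⟩ + ⟨Z², W(Z¹)⟩) + b² ⟨Z², W(Z²)⟩`,
in which the diagonal terms vanish. The two cross terms are nonnegative, so the midpoint is a
solution exactly when both of them vanish, and then every convex combination is one.
-/

open Matrix

section ConvexCombination

variable {m n : ℕ} (M : (Fin m → Fin n) → (Fin m → Fin n) → ℝ) (Q : (Fin m → Fin n) → ℝ)
  {Z₁ Z₂ : (Fin m → Fin n) → ℝ} {a b : ℝ}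

lemma tmul_eq_mulVec (Z : (Fin m → Fin n) → ℝ) : tmul M Z = of M *ᵥ Z := rfl

lemma tinner_eq_dotProduct (A B : (Fin m → Fin n) → ℝ) : tinner A B = A ⬝ᵥ B := rfl

lemma tinner_nonneg {A B : (Fin m → Fin n) → ℝ} (hA : ∀ i, 0 ≤ A i) (hB : ∀ i, 0 ≤ B i) :
    0 ≤ tinner A B :=
  Finset.sum_nonneg fun i _ => mul_nonneg (hA i) (hB i)

lemma tmul_convexCombo_add (hab : a + b = 1) :
    (fun i => tmul M (a • Z₁ + b • Z₂) i + Q i) =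
      a • (fun i => tmul M Z₁ i + Q i) + b • (fun i => tmul M Z₂ i + Q i) := by
  ext i
  simp only [tmul_eq_mulVec, mulVec_add, mulVec_smul, Pi.add_apply, Pi.smul_apply, smul_eq_mul]
  linear_combination -Q i * hab

lemma tinner_convexCombo (hab : a + b = 1) :
    tinner (a • Z₁ + b • Z₂) (fun i => tmul M (a • Z₁ + b • Z₂) i + Q i) =
      a * a * tinner Z₁ (fun i => tmul M Z₁ i + Q i) +
        a * b * (tinner Z₁ (fun i => tmul M Z₂ i + Q i) +
          tinner Z₂ (fun i => tmul M Z₁ i + Q i)) +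
        b * b * tinner Z₂ (fun i => tmul M Z₂ i + Q i) := by
  simp only [tmul_convexCombo_add M Q hab, tinner_eq_dotProduct, add_dotProduct, dotProduct_add,
    smul_dotProduct, dotProduct_smul, smul_eq_mul]
  ring

lemma convexCombo_mem_SOL_iff (h₁ : Z₁ ∈ SOL M Q) (h₂ : Z₂ ∈ SOL M Q) (ha : 0 ≤ a) (hb : 0 ≤ b)
    (hab : a + b = 1) :
    a • Z₁ + b • Z₂ ∈ SOL M Q ↔
      a * b * (tinner Z₁ (fun i => tmul M Z₂ i + Q i) +
        tinner Z₂ (fun i => tmul M Z₁ i + Q i)) = 0 := by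
  have hZ (i) : 0 ≤ (a • Z₁ + b • Z₂) i :=
    add_nonneg (mul_nonneg ha (h₁.1 i)) (mul_nonneg hb (h₂.1 i))
  have hW (i) : 0 ≤ tmul M (a • Z₁ + b • Z₂) i + Q i := by
    rw [congrFun (tmul_convexCombo_add M Q hab) i]
    exact add_nonneg (mul_nonneg ha (h₁.2.1 i)) (mul_nonneg hb (h₂.2.1 i))
  simp only [SOL, Set.mem_ofPred_eq, tinner_convexCombo M Q hab, h₁.2.2, h₂.2.2, mul_zero,
    add_zero, zero_add]
  exact ⟨fun h => h.2.2, fun h => ⟨hZ, hW, h⟩⟩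

end ConvexCombination

theorem stmt8 {m n : ℕ} (M : (Fin m → Fin n) → (Fin m → Fin n) → ℝ)
    (Q : (Fin m → Fin n) → ℝ) :
    Convex ℝ (SOL M Q) ↔
      ∀ Z1 ∈ SOL M Q, ∀ Z2 ∈ SOL M Q,
        tinner Z1 (fun i => tmul M Z2 i + Q i) = 0 ∧
        tinner Z2 (fun i => tmul M Z1 i + Q i) = 0 := by
  constructor
  · intro hconv Z1 h1 Z2 h2
    have hcross := (convexCombo_mem_SOL_iff M Q h1 h2 (by norm_num) (by norm_num)
      (by norm_num)).1 (hconv h1 h2 (by norm_num) (by norm_num) (add_halves 1))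
    have h12 := tinner_nonneg h1.1 h2.2.1
    have h21 := tinner_nonneg h2.1 h1.2.1
    constructor <;> linarith
  · intro h Z1 h1 Z2 h2 a b ha hb hab
    obtain ⟨h12, h21⟩ := h Z1 h1 Z2 h2
    rw [convexCombo_mem_SOL_iff M Q h1 h2 ha hb hab, h12, h21]
    ring
end

section
/- Suppose M ∈ R^{[2m,n]} is T-column sufficient, and suppose Z* and U* are tensors satisfying the KKT-type conditions: (1) 2MZ* + Q − MU* ≥ 0 entrywise, (2) ⟨Z*, 2MZ* + Q − MU*⟩ = 0, (3) U* ≥ 0 entrywise and ⟨U*, MZ* + Q⟩ = 0, (4) Z* ≥ 0 and MZ* + Q ≥ 0 entrywise, and (5) (Z* − U*)_i (M(Z* − U*))_i ≤ 0 for all multi-indices i. Then Z* solves TLCP(M,Q), i.e., ⟨Z*, MZ* + Q⟩ = 0 (indeed z*_i (MZ* + Q)_i = 0 for all i). -/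
open Finset

/- Column sufficiency applied to `Z* - U*` makes every product `(z - u)_i (M(Z - U))_i` vanish,
and `M(Z - U) = V - W` with `V = 2MZ + Q - MU` and `W = MZ + Q`. Expanding with the complementarity
conditions `z_i v_i = 0` and `u_i w_i = 0` leaves `z_i w_i + u_i v_i = 0`, a sum of two nonnegative
terms. -/

theorem tmul_sub {m n : ℕ} (M : (Fin m → Fin n) → (Fin m → Fin n) → ℝ)
    (X Y : (Fin m → Fin n) → ℝ) : tmul M (X - Y) = tmul M X - tmul M Y := by
  ext i
  simp only [tmul, Pi.sub_apply, mul_sub, Finset.sum_sub_distrib]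

theorem tinner_eq_zero_iff_of_nonneg {m n : ℕ} {A B : (Fin m → Fin n) → ℝ}
    (hA : ∀ i, 0 ≤ A i) (hB : ∀ i, 0 ≤ B i) : tinner A B = 0 ↔ ∀ i, A i * B i = 0 := by
  simpa only [tinner, Finset.mem_univ, true_implies] using
    Finset.sum_eq_zero_iff_of_nonneg (s := Finset.univ) fun i _ => mul_nonneg (hA i) (hB i)

theorem mul_eq_zero_of_sub_mul_sub_eq_zero {z u v w : ℝ} (hz : 0 ≤ z) (hu : 0 ≤ u)
    (hv : 0 ≤ v) (hw : 0 ≤ w) (hzv : z * v = 0) (huw : u * w = 0)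
    (h : (z - u) * (v - w) = 0) : z * w = 0 := by
  nlinarith [mul_nonneg hz hw, mul_nonneg hu hv]

theorem stmt12 {m n : ℕ} (M : (Fin m → Fin n) → (Fin m → Fin n) → ℝ)
    (hM : TColSuff M) (Q Zs Us : (Fin m → Fin n) → ℝ)
    (h1 : ∀ i, 0 ≤ 2 * tmul M Zs i + Q i - tmul M Us i)
    (h2 : tinner Zs (fun i => 2 * tmul M Zs i + Q i - tmul M Us i) = 0)
    (h3 : (∀ i, 0 ≤ Us i) ∧ tinner Us (fun i => tmul M Zs i + Q i) = 0)
    (h4 : (∀ i, 0 ≤ Zs i) ∧ (∀ i, 0 ≤ tmul M Zs i + Q i))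
    (h5 : ∀ i, (Zs i - Us i) * tmul M (fun j => Zs j - Us j) i ≤ 0) :
    (∀ i, Zs i * (tmul M Zs i + Q i) = 0) ∧
      tinner Zs (fun i => tmul M Zs i + Q i) = 0 := by
  obtain ⟨hUs, hUs_W⟩ := h3
  obtain ⟨hZs, hW⟩ := h4
  have hZV := (tinner_eq_zero_iff_of_nonneg hZs h1).1 h2
  have hUW := (tinner_eq_zero_iff_of_nonneg hUs hW).1 hUs_W
  have hdiff : ∀ i, (Zs i - Us i) *
      ((2 * tmul M Zs i + Q i - tmul M Us i) - (tmul M Zs i + Q i)) = 0 := by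
    intro i
    have := hM (Zs - Us) h5 i
    simp only [tmul_sub, Pi.sub_apply] at this
    linear_combination this
  have hZW : ∀ i, Zs i * (tmul M Zs i + Q i) = 0 := fun i =>
    mul_eq_zero_of_sub_mul_sub_eq_zero (hZs i) (hUs i) (h1 i) (hW i) (hZV i) (hUW i) (hdiff i)
  exact ⟨hZW, Finset.sum_eq_zero fun i _ => hZW i⟩
end

section
/- Let M ∈ R^{[4,2]} have entries m_{1111} = m_{1212} = m_{2121} = m_{2222} = 1, m_{1122} = m_{1221} = −1, m_{2112} = m_{2211} = −2, and all other entries zero. Then M is T-non-degenerate but not a T-P tensor. -/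
open Finset

/-!
For this `M` the map `Z ↦ MZ` splits into two copies of the block `[[1, -1], [-2, 1]]`, acting on
`(z₁₁, z₂₂)` and on `(z₁₂, z₂₁)`. If all products `z_ij (MZ)_ij` vanish, each block gives
`x (x - y) = 0` and `y (y - 2x) = 0`, which force `x = y = 0` since `2 ≠ 1`. The all-ones `Z`
has products `0, 0, -1, -1`, none of them positive.
-/

theorem sum_fin_two_fin_two {R : Type*} [AddCommMonoid R] (f : (Fin 2 → Fin 2) → R) :
    ∑ j, f j = f ![0, 0] + f ![0, 1] + f ![1, 0] + f ![1, 1] := by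
  rw [← Equiv.sum_comp (finTwoArrowEquiv (Fin 2)).symm, Fintype.sum_prod_type]
  simp [add_assoc]

theorem forall_fin_two_fin_two {P : (Fin 2 → Fin 2) → Prop} :
    (∀ i, P i) ↔ P ![0, 0] ∧ P ![0, 1] ∧ P ![1, 0] ∧ P ![1, 1] := by
  simp [Fin.forall_fin_succ_pi, Fin.forall_fin_zero_pi, Fin.forall_fin_two, and_assoc]

theorem eq_zero_and_eq_zero_of_mul_sub_eq_zero {R : Type*} [CommRing R] [NoZeroDivisors R]
    {k x y : R} (hk : k ≠ 1) (hx : x * (x - y) = 0) (hy : y * (y - k * x) = 0) :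
    x = 0 ∧ y = 0 := by
  rcases mul_eq_zero.mp hx with rfl | hxy
  · simpa using hy
  · obtain rfl : x = y := sub_eq_zero.mp hxy
    have : x * x * (1 - k) = 0 := by rw [← hy]; ring
    have hx0 : x = 0 := by simpa [sub_eq_zero, hk.symm] using this
    exact ⟨hx0, hx0⟩

def exampleTensor : (Fin 2 → Fin 2) → (Fin 2 → Fin 2) → ℝ := fun i j =>
  if i 0 = 0 ∧ i 1 = 0 ∧ j 0 = 0 ∧ j 1 = 0 then (1 : ℝ)
  else if i 0 = 0 ∧ i 1 = 1 ∧ j 0 = 0 ∧ j 1 = 1 then 1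
  else if i 0 = 1 ∧ i 1 = 0 ∧ j 0 = 1 ∧ j 1 = 0 then 1
  else if i 0 = 1 ∧ i 1 = 1 ∧ j 0 = 1 ∧ j 1 = 1 then 1
  else if i 0 = 0 ∧ i 1 = 0 ∧ j 0 = 1 ∧ j 1 = 1 then -1
  else if i 0 = 0 ∧ i 1 = 1 ∧ j 0 = 1 ∧ j 1 = 0 then -1
  else if i 0 = 1 ∧ i 1 = 0 ∧ j 0 = 0 ∧ j 1 = 1 then -2
  else if i 0 = 1 ∧ i 1 = 1 ∧ j 0 = 0 ∧ j 1 = 0 then -2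
  else 0

theorem tmul_exampleTensor (Z : (Fin 2 → Fin 2) → ℝ) :
    tmul exampleTensor Z ![0, 0] = Z ![0, 0] - Z ![1, 1] ∧
    tmul exampleTensor Z ![0, 1] = Z ![0, 1] - Z ![1, 0] ∧
    tmul exampleTensor Z ![1, 0] = Z ![1, 0] - 2 * Z ![0, 1] ∧
    tmul exampleTensor Z ![1, 1] = Z ![1, 1] - 2 * Z ![0, 0] := by
  refine ⟨?_, ?_, ?_, ?_⟩ <;>
    · simp [tmul, exampleTensor, sum_fin_two_fin_two]
      ring

theorem exampleTensor_tnd : TND exampleTensor := by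
  intro Z hZ
  by_contra! h
  obtain ⟨h₀₀, h₀₁, h₁₀, h₁₁⟩ := forall_fin_two_fin_two.mp h
  obtain ⟨t₀₀, t₀₁, t₁₀, t₁₁⟩ := tmul_exampleTensor Z
  simp only [t₀₀, t₀₁, t₁₀, t₁₁] at h₀₀ h₀₁ h₁₀ h₁₁
  obtain ⟨hz₀₀, hz₁₁⟩ := eq_zero_and_eq_zero_of_mul_sub_eq_zero (by norm_num) h₀₀ h₁₁
  obtain ⟨hz₀₁, hz₁₀⟩ := eq_zero_and_eq_zero_of_mul_sub_eq_zero (by norm_num) h₀₁ h₁₀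
  exact hZ (funext (forall_fin_two_fin_two.mpr ⟨hz₀₀, hz₀₁, hz₁₀, hz₁₁⟩))

theorem exampleTensor_not_tp : ¬ TP exampleTensor := by
  intro h
  obtain ⟨i, hi⟩ := h 1 one_ne_zero
  have hnonpos : ∀ i, (1 : (Fin 2 → Fin 2) → ℝ) i * tmul exampleTensor 1 i ≤ 0 := by
    obtain ⟨t₀₀, t₀₁, t₁₀, t₁₁⟩ := tmul_exampleTensor 1
    refine forall_fin_two_fin_two.mpr ?_
    simp only [t₀₀, t₀₁, t₁₀, t₁₁, Pi.one_apply]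
    norm_num
  exact (hnonpos i).not_gt hi

theorem stmt19 (M : (Fin 2 → Fin 2) → (Fin 2 → Fin 2) → ℝ)
    (hM : ∀ i j : Fin 2 → Fin 2, M i j =
      if i 0 = 0 ∧ i 1 = 0 ∧ j 0 = 0 ∧ j 1 = 0 then (1 : ℝ)
      else if i 0 = 0 ∧ i 1 = 1 ∧ j 0 = 0 ∧ j 1 = 1 then 1
      else if i 0 = 1 ∧ i 1 = 0 ∧ j 0 = 1 ∧ j 1 = 0 then 1
      else if i 0 = 1 ∧ i 1 = 1 ∧ j 0 = 1 ∧ j 1 = 1 then 1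
      else if i 0 = 0 ∧ i 1 = 0 ∧ j 0 = 1 ∧ j 1 = 1 then -1
      else if i 0 = 0 ∧ i 1 = 1 ∧ j 0 = 1 ∧ j 1 = 0 then -1
      else if i 0 = 1 ∧ i 1 = 0 ∧ j 0 = 0 ∧ j 1 = 1 then -2
      else if i 0 = 1 ∧ i 1 = 1 ∧ j 0 = 0 ∧ j 1 = 0 then -2
      else 0) :
    TND M ∧ ¬ TP M := by
  obtain rfl : M = exampleTensor := funext₂ hM
  exact ⟨exampleTensor_tnd, exampleTensor_not_tp⟩
end
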